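/- arXiv:1703.03603 — 11 statements merged into one kernel-verified Lean document; each statement's English description precedes it below -/
import Mathlib

section
/- Let f be a size function, let S* be an optimal solution to f-DS (i.e., a nonempty subset of V maximizing the f-density w(S)/f(|S|)), and let S_DS be a nonempty subset of V maximizing the density w(S)/|S|. Then f(|S*|)/|S*| ≤ f(|S_DS|)/|S_DS|. -/
structure WGraph (V : Type) [Fintype V] [DecidableEq V] where
  E : Finset (Sym2 V)
  not_diag : ∀ e ∈ E, ¬ e.IsDiag
  w : Sym2 V → ℝ
  w_pos : ∀ e ∈ E, 0 < w e

variable {V : Type} [Fintype V] [DecidableEq V]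

def WGraph.wS (G : WGraph V) (S : Finset V) : ℝ :=
  ∑ e ∈ G.E.filter (fun e => e ∈ S.sym2), G.w e

def WGraph.deg (G : WGraph V) (S : Finset V) (v : V) : ℝ :=
  ∑ u ∈ S.filter (fun u => s(u, v) ∈ G.E), G.w s(u, v)

/-! With `a = |S*|`, `b = |S_DS|`, the two optimality conditions read
`w(S_DS) / f b ≤ w(S*) / f a` and `w(S*) / a ≤ w(S_DS) / b`; writing
`f a / a = (f a / w(S*)) * (w(S*) / a)` and inverting the first inequality gives the claim.
This needs `w(S*)` and `w(S_DS)` positive, which holds because the graph has an edge, so some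
set has positive density and the optima are at least as dense. -/

theorem div_le_div_of_div_le_div_of_div_le_div {K : Type*} [Field K] [LinearOrder K]
    [IsStrictOrderedRing K] {p q x y a b : K} (hp : 0 < p) (hq : 0 < q) (hy : 0 < y)
    (ha : 0 ≤ a) (h₁ : q / y ≤ p / x) (h₂ : p / a ≤ q / b) : x / a ≤ y / b := by
  have h₁' : x / p ≤ y / q := by
    simpa only [inv_div] using inv_anti₀ (div_pos hq hy) h₁
  calc x / a = x / p * (p / a) := by field_simp
    _ ≤ y / q * (q / b) := mul_le_mul h₁' h₂ (div_nonneg hp.le ha) (div_nonneg hy.le hq.le)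
    _ = y / b := by field_simp

namespace WGraph

theorem wS_pos_of_mem (G : WGraph V) {S : Finset V} {e : Sym2 V} (he : e ∈ G.E)
    (heS : e ∈ S.sym2) : 0 < G.wS S :=
  Finset.sum_pos (fun e' he' => G.w_pos e' (Finset.mem_filter.mp he').1)
    ⟨e, Finset.mem_filter.mpr ⟨he, heS⟩⟩

theorem wS_pos_of_forall_div_le (G : WGraph V) (hE : G.E.Nonempty) {c : Finset V → ℝ}
    (hc : ∀ S : Finset V, S.Nonempty → 0 < c S) {T : Finset V}
    (hT : ∀ S : Finset V, S.Nonempty → G.wS S / c S ≤ G.wS T / c T) (hTne : T.Nonempty) :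
    0 < G.wS T := by
  obtain ⟨e, he⟩ := hE
  have huniv : (Finset.univ : Finset V).Nonempty := by
    induction e using Sym2.ind with
    | _ u _ => exact ⟨u, Finset.mem_univ u⟩
  have hw : 0 < G.wS Finset.univ :=
    G.wS_pos_of_mem he (Finset.mem_sym2_iff.mpr fun a _ => Finset.mem_univ a)
  have hdens : 0 < G.wS T / c T := (div_pos hw (hc _ huniv)).trans_le (hT _ huniv)
  exact (div_pos_iff_of_pos_right (hc T hTne)).mp hdens

end WGraph

theorem stmt0_general (G : WGraph V) (hE : G.E.Nonempty)
    (f : ℕ → ℝ) (hfpos : ∀ x, 1 ≤ x → 0 < f x)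
    (Sstar SDS : Finset V) (hS : Sstar.Nonempty) (hD : SDS.Nonempty)
    (hopt : ∀ S : Finset V, S.Nonempty → G.wS S / f S.card ≤ G.wS Sstar / f Sstar.card)
    (hoptD : ∀ S : Finset V, S.Nonempty → G.wS S / S.card ≤ G.wS SDS / SDS.card) :
    f Sstar.card / Sstar.card ≤ f SDS.card / SDS.card := by
  have hf : ∀ S : Finset V, S.Nonempty → 0 < f S.card := fun S hS => hfpos _ hS.card_pos
  have hcard : ∀ S : Finset V, S.Nonempty → (0 : ℝ) < S.card := fun S hS => by
    exact_mod_cast hS.card_pos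
  exact div_le_div_of_div_le_div_of_div_le_div
    (G.wS_pos_of_forall_div_le hE hf hopt hS) (G.wS_pos_of_forall_div_le hE hcard hoptD hD)
    (hf SDS hD) (hcard Sstar hS).le (hopt SDS hD) (hoptD Sstar hS)

theorem stmt0 (G : WGraph V) (hE : G.E.Nonempty)
    (f : ℕ → ℝ) (hmono : Monotone f) (hf0 : f 0 = 0) (hfpos : ∀ x, 1 ≤ x → 0 < f x)
    (Sstar SDS : Finset V) (hS : Sstar.Nonempty) (hD : SDS.Nonempty)
    (hopt : ∀ S : Finset V, S.Nonempty → G.wS S / f S.card ≤ G.wS Sstar / f Sstar.card)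
    (hoptD : ∀ S : Finset V, S.Nonempty → G.wS S / S.card ≤ G.wS SDS / SDS.card) :
    f Sstar.card / Sstar.card ≤ f SDS.card / SDS.card :=
  stmt0_general G hE f hfpos Sstar SDS hS hD hopt hoptD
end

section
/- Let k be an integer with 2 ≤ k ≤ n and let e₀ ∈ E be an arbitrary edge. Define f:ℤ_{≥0}→ℝ_{≥0} by f(x) = max{ x, (w(V)/(w(e₀)/2))·(x−k) + k }. Then f is a convex size function, and a nonempty subset S ⊆ V maximizes w(S)/|S| over all nonempty subsets of size at most k if and only if S maximizes w(S)/f(|S|) over all nonempty subsets of V. -/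
variable {V : Type} [Fintype V] [DecidableEq V]

/-!
For `x ≤ k` the size function is `x` itself, so on sets of size at most `k` the two objectives
agree. Beyond `k` it grows with slope `a = w(V) / (w(e₀)/2) ≥ 2`, so a set `T` with `|T| > k`
has `w(T) / f(|T|) < w(V) / a = w(e₀)/2`, while the two endpoints of `e₀` already reach density
`w(e₀)/2` with `f(2) = 2`. Hence neither problem is ever solved by a set of more than `k`
vertices. Convexity holds because `f` is the maximum of two affine functions.
-/

section MaxAffine

variable {a : ℝ} {k : ℕ} {f : ℕ → ℝ}

theorem second_diff_max_nonneg {p q : ℕ → ℝ} (hp : ∀ x, p x + p (x + 2) = 2 * p (x + 1))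
    (hq : ∀ x, q x + q (x + 2) = 2 * q (x + 1)) (x : ℕ) :
    0 ≤ max (p x) (q x) - 2 * max (p (x + 1)) (q (x + 1)) + max (p (x + 2)) (q (x + 2)) := by
  have hp₀ := le_max_left (p x) (q x)
  have hp₂ := le_max_left (p (x + 2)) (q (x + 2))
  have hq₀ := le_max_right (p x) (q x)
  have hq₂ := le_max_right (p (x + 2)) (q (x + 2))
  rcases le_total (p (x + 1)) (q (x + 1)) with h | h
  · rw [max_eq_right h]; linarith [hq x]
  · rw [max_eq_left h]; linarith [hp x]

variable (hf : ∀ x : ℕ, f x = max (x : ℝ) (a * ((x : ℝ) - k) + k))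
include hf

theorem maxAffine_eq_self (ha : 1 ≤ a) {x : ℕ} (hx : x ≤ k) : f x = x := by
  have hxk : (x : ℝ) ≤ k := Nat.cast_le.2 hx
  rw [hf, max_eq_left]
  nlinarith [mul_nonneg (sub_nonneg.2 ha) (sub_nonneg.2 hxk)]

theorem maxAffine_eq_affine (ha : 1 ≤ a) {x : ℕ} (hx : k ≤ x) : f x = a * ((x : ℝ) - k) + k := by
  have hkx : (k : ℝ) ≤ x := Nat.cast_le.2 hx
  rw [hf, max_eq_right]
  nlinarith [mul_nonneg (sub_nonneg.2 ha) (sub_nonneg.2 hkx)]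

theorem maxAffine_isSizeFunction (ha : 1 ≤ a) :
    Monotone f ∧ f 0 = 0 ∧ (∀ x, 1 ≤ x → 0 < f x) ∧
      (∀ x : ℕ, 0 ≤ f x - 2 * f (x + 1) + f (x + 2)) := by
  refine ⟨?_, ?_, fun x hx => ?_, fun x => ?_⟩
  · rw [show f = _ from funext hf]
    exact Nat.mono_cast.max fun x y hxy => by
      have : (x : ℝ) ≤ y := Nat.cast_le.2 hxy
      nlinarith
  · simpa using maxAffine_eq_self hf ha (Nat.zero_le k)
  · have : (1 : ℝ) ≤ x := Nat.one_le_cast.2 hx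
    linarith [hf x, le_max_left (x : ℝ) (a * ((x : ℝ) - k) + k)]
  · simp only [hf]
    exact second_diff_max_nonneg (p := fun x : ℕ => (x : ℝ))
      (q := fun x : ℕ => a * ((x : ℝ) - k) + k) (fun x => by push_cast; ring)
      (fun x => by push_cast; ring) x

end MaxAffine

theorem density_maximizer_iff {ι : Type*} (P : ι → Prop) (φ : ι → ℝ) (n : ι → ℕ) (f : ℕ → ℝ)
    {k : ℕ} {c : ℝ} (hf : ∀ x ≤ k, f x = x)
    (hlarge : ∀ T, k < n T → φ T / f (n T) < c)
    {S₀ : ι} (hPS₀ : P S₀) (hS₀ : n S₀ ≤ k) (hc : c ≤ φ S₀ / n S₀) (S : ι) :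
    (n S ≤ k ∧ ∀ T, P T → n T ≤ k → φ T / n T ≤ φ S / n S) ↔
      ∀ T, P T → φ T / f (n T) ≤ φ S / f (n S) := by
  constructor
  · rintro ⟨hSk, hSmax⟩ T hT
    rw [hf _ hSk]
    rcases le_or_gt (n T) k with hTk | hTk
    · rw [hf _ hTk]
      exact hSmax T hT hTk
    · linarith [hlarge T hTk, hSmax S₀ hPS₀ hS₀]
  · intro hSmax
    have hSk : n S ≤ k := by
      by_contra! hSk
      have := hSmax S₀ hPS₀
      rw [hf _ hS₀] at this
      linarith [hlarge S hSk]
    refine ⟨hSk, fun T hT hTk => ?_⟩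
    simpa only [hf _ hTk, hf _ hSk] using hSmax T hT

namespace WGraph

variable (G : WGraph V)

theorem wS_mono {S T : Finset V} (hST : S ⊆ T) : G.wS S ≤ G.wS T :=
  Finset.sum_le_sum_of_subset_of_nonneg
    (Finset.monotone_filter_right _ fun _ _ => @Finset.sym2_mono _ _ _ hST _)
    fun e he _ => (G.w_pos e (Finset.mem_filter.1 he).1).le

theorem w_le_wS {e : Sym2 V} (he : e ∈ G.E) {S : Finset V} (heS : e ∈ S.sym2) : G.w e ≤ G.wS S :=
  Finset.single_le_sum (fun e he => (G.w_pos e (Finset.mem_filter.1 he).1).le)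
    (Finset.mem_filter.2 ⟨he, heS⟩)

theorem w_le_wS_univ {e : Sym2 V} (he : e ∈ G.E) : G.w e ≤ G.wS Finset.univ :=
  G.w_le_wS he (Finset.mem_sym2_iff.2 fun _ _ => Finset.mem_univ _)

theorem exists_card_eq_two_w_le_wS {e : Sym2 V} (he : e ∈ G.E) :
    ∃ S : Finset V, S.card = 2 ∧ G.w e ≤ G.wS S := by
  induction e using Sym2.ind with
  | _ u v =>
    have huv : u ≠ v := by simpa using G.not_diag _ he
    exact ⟨{u, v}, Finset.card_pair huv, G.w_le_wS he (by simp)⟩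

theorem two_le_wS_univ_div_half {e : Sym2 V} (he : e ∈ G.E) :
    2 ≤ G.wS Finset.univ / (G.w e / 2) := by
  have hw := G.w_pos e he
  rw [le_div_iff₀ (by linarith)]
  linarith [G.w_le_wS_univ he]

theorem wS_div_lt_of_card_gt {e : Sym2 V} (he : e ∈ G.E) {k : ℕ} (hk : 1 ≤ k) {f : ℕ → ℝ}
    (hf : ∀ x : ℕ, f x = max (x : ℝ) ((G.wS Finset.univ / (G.w e / 2)) * ((x : ℝ) - k) + k))
    {T : Finset V} (hT : k < T.card) : G.wS T / f T.card < G.w e / 2 := by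
  set a := G.wS Finset.univ / (G.w e / 2)
  have hw := G.w_pos e he
  have ha : 2 ≤ a := G.two_le_wS_univ_div_half he
  have hW : 0 < G.wS Finset.univ := hw.trans_le (G.w_le_wS_univ he)
  have hfT : a < f T.card := by
    have hkT : (k : ℝ) + 1 ≤ T.card := by exact_mod_cast hT
    have hk' : (1 : ℝ) ≤ k := by exact_mod_cast hk
    rw [maxAffine_eq_affine hf (by linarith) hT.le]
    nlinarith
  calc G.wS T / f T.card ≤ G.wS Finset.univ / f T.card :=
        div_le_div_of_nonneg_right (G.wS_mono (Finset.subset_univ T)) (by linarith)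
    _ < G.wS Finset.univ / a := div_lt_div_of_pos_left hW (by linarith) hfT
    _ = G.w e / 2 := by simp only [a]; field_simp

end WGraph

theorem stmt1_general (G : WGraph V) (e₀ : Sym2 V) (he₀ : e₀ ∈ G.E)
    (k : ℕ) (hk2 : 2 ≤ k)
    (f : ℕ → ℝ)
    (hf : ∀ x : ℕ, f x =
      max (x : ℝ) ((G.wS Finset.univ / (G.w e₀ / 2)) * ((x : ℝ) - k) + k)) :
    (Monotone f ∧ f 0 = 0 ∧ (∀ x, 1 ≤ x → 0 < f x) ∧
      (∀ x : ℕ, 0 ≤ f x - 2 * f (x + 1) + f (x + 2))) ∧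
    (∀ S : Finset V, S.Nonempty →
      ((S.card ≤ k ∧ ∀ T : Finset V, T.Nonempty → T.card ≤ k →
          G.wS T / T.card ≤ G.wS S / S.card) ↔
        (∀ T : Finset V, T.Nonempty → G.wS T / f T.card ≤ G.wS S / f S.card))) := by
  have ha : 1 ≤ G.wS Finset.univ / (G.w e₀ / 2) := by
    linarith [G.two_le_wS_univ_div_half he₀]
  refine ⟨maxAffine_isSizeFunction hf ha, fun S _ => ?_⟩
  obtain ⟨S₀, hS₀card, hS₀w⟩ := G.exists_card_eq_two_w_le_wS he₀
  have hS₀ne : S₀.Nonempty := Finset.card_pos.1 (by omega)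
  refine density_maximizer_iff Finset.Nonempty G.wS Finset.card f
    (fun x hx => maxAffine_eq_self hf ha hx)
    (fun T hT => G.wS_div_lt_of_card_gt he₀ (by omega) hf hT) hS₀ne (by omega) ?_ S
  rw [hS₀card]
  push_cast
  linarith

theorem stmt1 (G : WGraph V) (e₀ : Sym2 V) (he₀ : e₀ ∈ G.E)
    (k : ℕ) (hk2 : 2 ≤ k) (hkn : k ≤ Fintype.card V)
    (f : ℕ → ℝ)
    (hf : ∀ x : ℕ, f x =
      max (x : ℝ) ((G.wS Finset.univ / (G.w e₀ / 2)) * ((x : ℝ) - k) + k)) :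
    (Monotone f ∧ f 0 = 0 ∧ (∀ x, 1 ≤ x → 0 < f x) ∧
      (∀ x : ℕ, 0 ≤ f x - 2 * f (x + 1) + f (x + 2))) ∧
    (∀ S : Finset V, S.Nonempty →
      ((S.card ≤ k ∧ ∀ T : Finset V, T.Nonempty → T.card ≤ k →
          G.wS T / T.card ≤ G.wS S / S.card) ↔
        (∀ T : Finset V, T.Nonempty → G.wS T / f T.card ≤ G.wS S / f S.card))) :=
  stmt1_general G e₀ he₀ k hk2 f hf
end

section
/- For integers i, j with 2 ≤ i ≤ j ≤ n, letting S_i* be a maximum weight subset of V of size i and S_j* a maximum weight subset of size j, it holds that w(S_i*)/C(i,2) ≥ w(S_j*)/C(j,2), where C(i,2)=i(i−1)/2. That is, the edge density max{w(S) : |S|=i}/C(i,2) is monotonically non-increasing in i. -/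
variable {V : Type} [Fintype V] [DecidableEq V]

/-!
Summing `w(S \ {v})` over `v ∈ S` counts every edge of `S` exactly `|S| - 2` times, so some
vertex can be deleted while keeping at least a `(|S| - 2) / |S|` fraction of the weight; this is
exactly the statement that the density `w(S) / C(|S|, 2)` does not drop. Deleting vertices one
at a time from `S_j` thus yields a set of size `i` at least as dense as `S_j`, and its weight is
bounded by that of the maximum `S_i`.
-/

open Finset

namespace WGraph

variable (G : WGraph V)

lemma sum_wS_erase (S : Finset V) :
    ∑ v ∈ S, G.wS (S.erase v) = ((#S : ℝ) - 2) * G.wS S := by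
  unfold wS
  simp_rw [sum_filter]
  rw [sum_comm, mul_sum]
  refine sum_congr rfl fun e he => ?_
  induction e using Sym2.ind with | _ a b => ?_
  have hab : a ≠ b := by simpa using G.not_diag _ he
  rw [← sum_filter, sum_const, nsmul_eq_mul]
  by_cases hS : a ∈ S ∧ b ∈ S
  · have hfilter : {v ∈ S | s(a, b) ∈ (S.erase v).sym2} = S \ {a, b} := by
      ext v
      simp only [mem_filter, mk_mem_sym2_iff, mem_erase, mem_sdiff, mem_insert, mem_singleton]
      grind
    have hpair : {a, b} ⊆ S := by simp [insert_subset_iff, hS]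
    have htwo : 2 ≤ #S := (card_pair hab).symm.le.trans (card_le_card hpair)
    rw [hfilter, card_sdiff_of_subset hpair, card_pair hab, if_pos (mk_mem_sym2_iff.2 hS),
      Nat.cast_sub htwo, Nat.cast_two]
  · have hfilter : {v ∈ S | s(a, b) ∈ (S.erase v).sym2} = ∅ := by
      ext v
      simp only [mem_filter, mk_mem_sym2_iff, mem_erase]
      grind
    rw [hfilter, if_neg (by rwa [mk_mem_sym2_iff])]
    simp

lemma exists_mem_wS_le_wS_erase {S : Finset V} (hS : S.Nonempty) :
    ∃ v ∈ S, ((#S : ℝ) - 2) * G.wS S ≤ #S * G.wS (S.erase v) := by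
  refine exists_le_of_sum_le hS (le_of_eq ?_)
  rw [sum_const, nsmul_eq_mul, ← mul_sum, sum_wS_erase]

noncomputable def density (S : Finset V) : ℝ := G.wS S / ((#S : ℝ) * ((#S : ℝ) - 1) / 2)

lemma exists_density_le_density_erase {S : Finset V} (hS : 3 ≤ #S) :
    ∃ v ∈ S, G.density S ≤ G.density (S.erase v) := by
  obtain ⟨v, hv, hle⟩ := G.exists_mem_wS_le_wS_erase (S := S) (card_pos.1 (by omega))
  refine ⟨v, hv, ?_⟩
  have hn : (3 : ℝ) ≤ #S := by exact_mod_cast hS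
  rw [density, density, card_erase_of_mem hv, Nat.cast_pred (by omega),
    div_le_div_iff₀ (by nlinarith) (by nlinarith)]
  nlinarith

lemma exists_subset_card_eq_density_le {i : ℕ} (hi : 2 ≤ i) :
    ∀ {T : Finset V}, i ≤ #T → ∃ U ⊆ T, #U = i ∧ G.density T ≤ G.density U := by
  suffices ∀ n, i ≤ n → ∀ T : Finset V, #T = n → ∃ U ⊆ T, #U = i ∧ G.density T ≤ G.density U
    from fun {T} hT => this _ hT T rfl
  intro n hn
  induction n, hn using Nat.le_induction with
  | base => exact fun T hT => ⟨T, subset_rfl, hT, le_rfl⟩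
  | succ n hn ih =>
    intro T hT
    obtain ⟨v, hv, hTv⟩ := G.exists_density_le_density_erase (S := T) (by omega)
    obtain ⟨U, hUT, hU, hUv⟩ := ih (T.erase v) (by rw [card_erase_of_mem hv, hT]; rfl)
    exact ⟨U, hUT.trans (erase_subset v T), hU, hTv.trans hUv⟩

end WGraph

theorem stmt2_general (G : WGraph V)
    (i j : ℕ) (h2i : 2 ≤ i) (hij : i ≤ j)
    (Si Sj : Finset V) (hSj : Sj.card = j)
    (hSimax : ∀ S : Finset V, S.card = i → G.wS S ≤ G.wS Si) :
    G.wS Sj / ((j : ℝ) * ((j : ℝ) - 1) / 2) ≤ G.wS Si / ((i : ℝ) * ((i : ℝ) - 1) / 2) := by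
  obtain ⟨U, -, hU, hdensity⟩ := G.exists_subset_card_eq_density_le h2i (T := Sj) (by omega)
  have hi : (2 : ℝ) ≤ i := by exact_mod_cast h2i
  calc G.wS Sj / ((j : ℝ) * ((j : ℝ) - 1) / 2) = G.density Sj := by rw [WGraph.density, hSj]
    _ ≤ G.density U := hdensity
    _ = G.wS U / ((i : ℝ) * ((i : ℝ) - 1) / 2) := by rw [WGraph.density, hU]
    _ ≤ G.wS Si / ((i : ℝ) * ((i : ℝ) - 1) / 2) :=
      div_le_div_of_nonneg_right (hSimax U hU) (by nlinarith)

theorem stmt2 (G : WGraph V) (hE : G.E.Nonempty)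
    (i j : ℕ) (h2i : 2 ≤ i) (hij : i ≤ j) (hjn : j ≤ Fintype.card V)
    (Si Sj : Finset V) (hSi : Si.card = i) (hSj : Sj.card = j)
    (hSimax : ∀ S : Finset V, S.card = i → G.wS S ≤ G.wS Si)
    (hSjmax : ∀ S : Finset V, S.card = j → G.wS S ≤ G.wS Sj) :
    G.wS Sj / ((j : ℝ) * ((j : ℝ) - 1) / 2) ≤ G.wS Si / ((i : ℝ) * ((i : ℝ) - 1) / 2) :=
  stmt2_general G i j h2i hij Si Sj hSj hSimax
end

section
/- Let f be a convex size function, let S* be an optimal solution to f-DS, and let k ≥ 2 be an integer with |S*| ≥ k. Let S_k* be a maximum weight subset of V of size k. Then w(S*)/f(|S*|) ≤ ( (2·f(k)/k²) / (f(|S*|)/|S*|²) ) · ( w(S_k*)/f(k) ). -/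
variable {V : Type} [Fintype V] [DecidableEq V]

open Finset

namespace WGraph

variable (G : WGraph V)

lemma wS_nonneg (S : Finset V) : 0 ≤ G.wS S :=
  sum_nonneg fun e he => (G.w_pos e (mem_filter.mp he).1).le

theorem sum_wS_powersetCard (S : Finset V) {k : ℕ} (hk : 2 ≤ k) :
    ∑ T ∈ S.powersetCard k, G.wS T = ((#S - 2).choose (k - 2) : ℝ) * G.wS S := by
  simp only [wS, sum_filter, mul_sum]
  rw [sum_comm]
  refine sum_congr rfl fun e he => ?_
  induction e using Sym2.inductionOn with
  | hf a b =>
    have hab : a ≠ b := fun h => G.not_diag _ he (by simp [h])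
    have hcard : #({a, b} : Finset V) = 2 := card_pair hab
    have hmem (T : Finset V) : s(a, b) ∈ T.sym2 ↔ {a, b} ⊆ T := by
      simp [insert_subset_iff]
    simp only [hmem, ← sum_filter, sum_const, nsmul_eq_mul]
    split_ifs with hS
    · rw [card_filter_powersetCard_subset _ _ _ hS (hcard ▸ hk), hcard]
    · rw [filter_false_of_mem fun T hT hsub => hS (hsub.trans (mem_powersetCard.mp hT).1)]
      simp

variable {G} in
theorem wS_mul_choose_two_le {S : Finset V} {k : ℕ} (hk : 2 ≤ k) (hkS : k ≤ #S) {M : ℝ}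
    (hM : ∀ T ∈ S.powersetCard k, G.wS T ≤ M) :
    G.wS S * k.choose 2 ≤ (#S).choose 2 * M := by
  have hc : (0 : ℝ) < (#S - 2).choose (k - 2) := by exact_mod_cast Nat.choose_pos (by omega)
  have hid : ((#S).choose k * k.choose 2 : ℝ) = (#S).choose 2 * (#S - 2).choose (k - 2) := by
    exact_mod_cast Nat.choose_mul hk
  set c : ℝ := Nat.cast ((#S - 2).choose (k - 2))
  have hsum : c * G.wS S ≤ (#S).choose k * M := by
    rw [← G.sum_wS_powersetCard S hk, ← card_powersetCard, ← nsmul_eq_mul]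
    exact sum_le_card_nsmul _ _ _ hM
  refine le_of_mul_le_mul_left ?_ hc
  calc c * (G.wS S * k.choose 2) = k.choose 2 * (c * G.wS S) := by ring
    _ ≤ k.choose 2 * ((#S).choose k * M) := by gcongr
    _ = c * ((#S).choose 2 * M) := by linear_combination M * hid

variable {G} in
theorem wS_mul_sq_le {S : Finset V} {k : ℕ} (hk : 2 ≤ k) (hkS : k ≤ #S) {M : ℝ}
    (hM : ∀ T ∈ S.powersetCard k, G.wS T ≤ M) :
    G.wS S * k ^ 2 ≤ 2 * #S ^ 2 * M := by
  obtain ⟨T, hT⟩ := powersetCard_nonempty.mpr hkS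
  have hM0 : 0 ≤ M := (G.wS_nonneg T).trans (hM T hT)
  have hS := G.wS_nonneg S
  have hk' : (2 : ℝ) ≤ k := by exact_mod_cast hk
  have hk2 : 0 ≤ (k : ℝ) * (k - 2) := mul_nonneg (by linarith) (by linarith)
  have h := wS_mul_choose_two_le hk hkS hM
  rw [Nat.cast_choose_two, Nat.cast_choose_two] at h
  calc G.wS S * k ^ 2 ≤ 4 * (G.wS S * (k * (k - 1) / 2)) := by
        nlinarith [mul_nonneg hS hk2]
    _ ≤ 4 * (#S * (#S - 1) / 2 * M) := by gcongr
    _ ≤ 2 * #S ^ 2 * M := by nlinarith [mul_nonneg (Nat.cast_nonneg (α := ℝ) #S) hM0]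

end WGraph

theorem stmt3_general (G : WGraph V)
    (f : ℕ → ℝ) (hfpos : ∀ x, 1 ≤ x → 0 < f x)
    (Sstar : Finset V)
    (k : ℕ) (hk2 : 2 ≤ k) (hks : k ≤ Sstar.card)
    (Sk : Finset V)
    (hSkmax : ∀ S : Finset V, S.card = k → G.wS S ≤ G.wS Sk) :
    G.wS Sstar / f Sstar.card ≤
      ((2 * f k / (k : ℝ) ^ 2) / (f Sstar.card / (Sstar.card : ℝ) ^ 2)) *
        (G.wS Sk / f k) := by
  have hkey := WGraph.wS_mul_sq_le hk2 hks fun T hT => hSkmax T (mem_powersetCard.mp hT).2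
  have hfs := hfpos _ (by omega : 1 ≤ #Sstar)
  have hfk := hfpos k (by omega)
  calc G.wS Sstar / f #Sstar = G.wS Sstar * k ^ 2 / (k ^ 2 * f #Sstar) := by field_simp
    _ ≤ 2 * #Sstar ^ 2 * G.wS Sk / (k ^ 2 * f #Sstar) := by gcongr
    _ = _ := by field_simp

theorem stmt3 (G : WGraph V) (hE : G.E.Nonempty)
    (f : ℕ → ℝ) (hmono : Monotone f) (hf0 : f 0 = 0) (hfpos : ∀ x, 1 ≤ x → 0 < f x)
    (hconv : ∀ x : ℕ, 0 ≤ f x - 2 * f (x + 1) + f (x + 2))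
    (Sstar : Finset V) (hne : Sstar.Nonempty)
    (hopt : ∀ S : Finset V, S.Nonempty → G.wS S / f S.card ≤ G.wS Sstar / f Sstar.card)
    (k : ℕ) (hk2 : 2 ≤ k) (hks : k ≤ Sstar.card)
    (Sk : Finset V) (hSk : Sk.card = k)
    (hSkmax : ∀ S : Finset V, S.card = k → G.wS S ≤ G.wS Sk) :
    G.wS Sstar / f Sstar.card ≤
      ((2 * f k / (k : ℝ) ^ 2) / (f Sstar.card / (Sstar.card : ℝ) ^ 2)) *
        (G.wS Sk / f k) :=
  stmt3_general G f hfpos Sstar k hk2 hks Sk hSkmax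
end

section
/- Let f be a size function and let S* be an optimal solution to f-DS with |S*| ≥ 2. Then for every vertex v ∈ S*, the weighted degree of v in the induced subgraph G[S*] satisfies d_{S*}(v) ≥ (f(|S*|) − f(|S*|−1)) · w(S*)/f(|S*|). -/
variable {V : Type} [Fintype V] [DecidableEq V]

theorem Finset.mem_sym2_erase_iff {α : Type*} [DecidableEq α] {s : Finset α} {a : α}
    {e : Sym2 α} : e ∈ (s.erase a).sym2 ↔ e ∈ s.sym2 ∧ a ∉ e := by
  simp only [Finset.mem_sym2_iff, Finset.mem_erase]
  constructor
  · exact fun h => ⟨fun b hb => (h b hb).2, fun ha => (h a ha).1 rfl⟩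
  · rintro ⟨h, ha⟩ b hb
    exact ⟨fun hba => ha (hba ▸ hb), h b hb⟩

namespace WGraph

variable (G : WGraph V) {S : Finset V} {v : V}

lemma deg_eq_sum_incident_edges (hv : v ∈ S) :
    G.deg S v = ∑ e ∈ G.E.filter (fun e => e ∈ S.sym2 ∧ v ∈ e), G.w e := by
  refine Finset.sum_bij (fun u _ => s(u, v)) ?_ ?_ ?_ ?_
  · intro u hu
    rw [Finset.mem_filter] at hu ⊢
    exact ⟨hu.2, Finset.mk_mem_sym2_iff.2 ⟨hu.1, hv⟩, Sym2.mem_mk_right u v⟩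
  · intro a _ b _ h
    exact Sym2.congr_left.mp h
  · intro e he
    obtain ⟨he, hS, hve⟩ := Finset.mem_filter.1 he
    have h_other : s(Sym2.Mem.other hve, v) = e := Sym2.eq_swap.trans (Sym2.other_spec hve)
    refine ⟨Sym2.Mem.other hve, Finset.mem_filter.2 ⟨?_, h_other.symm ▸ he⟩, h_other⟩
    exact Finset.mem_sym2_iff.1 hS _ (Sym2.other_mem hve)
  · intro u _
    rfl

lemma wS_eq_wS_erase_add_deg (hv : v ∈ S) :
    G.wS S = G.wS (S.erase v) + G.deg S v := by
  rw [G.deg_eq_sum_incident_edges hv, wS, wS,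
    ← Finset.sum_filter_add_sum_filter_not _ (fun e => v ∉ e)]
  simp only [Finset.filter_filter, Finset.mem_sym2_erase_iff, not_not]

end WGraph

theorem stmt5_general (G : WGraph V)
    (f : ℕ → ℝ) (hfpos : ∀ x, 1 ≤ x → 0 < f x)
    (Sstar : Finset V)
    (hopt : ∀ S : Finset V, S.Nonempty → G.wS S / f S.card ≤ G.wS Sstar / f Sstar.card)
    (hcard : 2 ≤ Sstar.card) (v : V) (hv : v ∈ Sstar) :
    (f Sstar.card - f (Sstar.card - 1)) * (G.wS Sstar / f Sstar.card) ≤ G.deg Sstar v := by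
  set n := Sstar.card
  set ρ := G.wS Sstar / f n
  have hcard_erase : (Sstar.erase v).card = n - 1 := Finset.card_erase_of_mem hv
  have h_erase : G.wS (Sstar.erase v) ≤ f (n - 1) * ρ := by
    have h := hopt (Sstar.erase v) (by rw [← Finset.card_pos, hcard_erase]; omega)
    rwa [hcard_erase, div_le_iff₀ (hfpos _ (by omega)), mul_comm] at h
  have h_whole : G.wS Sstar = f n * ρ := (mul_div_cancel₀ _ (hfpos n (by omega)).ne').symm
  linarith [G.wS_eq_wS_erase_add_deg hv, sub_mul (f n) (f (n - 1)) ρ]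

theorem stmt5 (G : WGraph V) (hE : G.E.Nonempty)
    (f : ℕ → ℝ) (hmono : Monotone f) (hf0 : f 0 = 0) (hfpos : ∀ x, 1 ≤ x → 0 < f x)
    (Sstar : Finset V) (hne : Sstar.Nonempty)
    (hopt : ∀ S : Finset V, S.Nonempty → G.wS S / f S.card ≤ G.wS Sstar / f Sstar.card)
    (hcard : 2 ≤ Sstar.card) (v : V) (hv : v ∈ Sstar) :
    (f Sstar.card - f (Sstar.card - 1)) * (G.wS Sstar / f Sstar.card) ≤ G.deg Sstar v :=
  stmt5_general G f hfpos Sstar hopt hcard v hv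
end

section
/- For every real number α ∈ [1,2] and all integers s, n with 2 ≤ s ≤ n, it holds that min{ 2^{α−1}·s^{2−α}, 2·n^{α−1}/(s^α − (s−1)^α) } ≤ 2·n^{(α−1)(2−α)}. Consequently, for f(x)=x^α the approximation ratio min{ (f(2)/2)/(f(s)/s²), (2f(n)/n)/(f(s)−f(s−1)) } is at most 2·n^{(α−1)(2−α)}. -/
/-!
Since `(s - 1) ^ α = (s - 1) ^ (α - 1) * (s - 1) ≤ s ^ (α - 1) * (s - 1)`, the denominator
`s ^ α - (s - 1) ^ α` is at least `s ^ (α - 1)`. Compare `s` with `n ^ (α - 1)`: if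
`s ≤ n ^ (α - 1)` the first term is at most `2 * (n ^ (α - 1)) ^ (2 - α)`; otherwise
`s ^ (α - 1) > n ^ ((α - 1) ^ 2)` and the second term is at most
`2 * n ^ (α - 1) / n ^ ((α - 1) ^ 2)`. Both bounds equal `2 * n ^ ((α - 1) * (2 - α))`.
-/

open Real

lemma rpow_sub_one_le_rpow_sub_rpow_sub_one {x α : ℝ} (hx : 1 ≤ x) (hα : 1 ≤ α) :
    x ^ (α - 1) ≤ x ^ α - (x - 1) ^ α := by
  have hα0 : α - 1 + 1 ≠ 0 := by linarith
  have hmono : (x - 1) ^ (α - 1) * (x - 1) ≤ x ^ (α - 1) * (x - 1) :=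
    mul_le_mul_of_nonneg_right (rpow_le_rpow (by linarith) (by linarith) (by linarith))
      (by linarith)
  have hsplit : ∀ y : ℝ, 0 ≤ y → y ^ α = y ^ (α - 1) * y := fun y hy => by
    rw [← rpow_add_one' hy hα0, sub_add_cancel]
  rw [hsplit x (by linarith), hsplit (x - 1) (by linarith)]
  linarith

lemma two_rpow_mul_rpow_le_of_le_rpow {α s n : ℝ} (hα2 : α ≤ 2) (hs : 0 ≤ s)
    (hn : 0 ≤ n) (h : s ≤ n ^ (α - 1)) :
    (2 : ℝ) ^ (α - 1) * s ^ (2 - α) ≤ 2 * n ^ ((α - 1) * (2 - α)) := by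
  have h2 : (2 : ℝ) ^ (α - 1) ≤ 2 := by
    simpa using rpow_le_rpow_of_exponent_le one_le_two (show α - 1 ≤ 1 by linarith)
  rw [rpow_mul hn]
  exact mul_le_mul h2 (rpow_le_rpow hs h (by linarith)) (rpow_nonneg hs _) zero_le_two

lemma rpow_div_le_of_rpow_lt {α s n D : ℝ} (hα1 : 1 ≤ α) (hn : 0 < n) (h : n ^ (α - 1) < s)
    (hD : s ^ (α - 1) ≤ D) :
    n ^ (α - 1) / D ≤ n ^ ((α - 1) * (2 - α)) := by
  have hlow : n ^ ((α - 1) * (α - 1)) ≤ D := by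
    rw [rpow_mul hn.le]
    exact (rpow_le_rpow (rpow_nonneg hn.le _) h.le (by linarith)).trans hD
  calc n ^ (α - 1) / D ≤ n ^ (α - 1) / n ^ ((α - 1) * (α - 1)) := by
        gcongr
    _ = n ^ ((α - 1) * (2 - α)) := by
        rw [← rpow_sub hn]
        ring_nf

theorem min_two_rpow_mul_rpow_rpow_div_le {α s n : ℝ} (hα1 : 1 ≤ α) (hα2 : α ≤ 2) (hs : 1 ≤ s)
    (hn : 0 < n) :
    min ((2 : ℝ) ^ (α - 1) * s ^ (2 - α)) (2 * n ^ (α - 1) / (s ^ α - (s - 1) ^ α)) ≤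
      2 * n ^ ((α - 1) * (2 - α)) := by
  rcases le_or_gt s (n ^ (α - 1)) with h | h
  · exact (min_le_left _ _).trans
      (two_rpow_mul_rpow_le_of_le_rpow hα2 (by linarith) hn.le h)
  · refine (min_le_right _ _).trans ?_
    rw [mul_div_assoc]
    gcongr
    exact rpow_div_le_of_rpow_lt hα1 hn h (rpow_sub_one_le_rpow_sub_rpow_sub_one hs hα1)

theorem stmt8 (α : ℝ) (hα1 : 1 ≤ α) (hα2 : α ≤ 2)
    (s n : ℕ) (hs : 2 ≤ s) (hsn : s ≤ n)
    (f : ℕ → ℝ) (hf : ∀ x : ℕ, f x = (x : ℝ) ^ α) :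
    min ((2 : ℝ) ^ (α - 1) * (s : ℝ) ^ (2 - α))
        (2 * (n : ℝ) ^ (α - 1) / ((s : ℝ) ^ α - ((s : ℝ) - 1) ^ α)) ≤
      2 * (n : ℝ) ^ ((α - 1) * (2 - α)) ∧
    min ((f 2 / 2) / (f s / (s : ℝ) ^ 2)) ((2 * f n / (n : ℝ)) / (f s - f (s - 1))) ≤
      2 * (n : ℝ) ^ ((α - 1) * (2 - α)) := by
  have hs1 : (1 : ℝ) ≤ s := by exact_mod_cast (by omega : 1 ≤ s)
  have hn : (0 : ℝ) < n := by exact_mod_cast (by omega : 0 < n)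
  have hbound := min_two_rpow_mul_rpow_rpow_div_le hα1 hα2 hs1 hn
  refine ⟨hbound, ?_⟩
  have hfirst : (f 2 / 2) / (f s / (s : ℝ) ^ 2) = (2 : ℝ) ^ (α - 1) * (s : ℝ) ^ (2 - α) := by
    rw [hf, hf, rpow_sub_one two_ne_zero, rpow_sub (by linarith), rpow_two]
    push_cast
    field_simp
  have hsecond : (2 * f n / (n : ℝ)) / (f s - f (s - 1)) =
      2 * (n : ℝ) ^ (α - 1) / ((s : ℝ) ^ α - ((s : ℝ) - 1) ^ α) := by
    rw [hf, hf, hf, Nat.cast_sub (by omega), Nat.cast_one, rpow_sub_one hn.ne', mul_div_assoc]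
  rwa [hfirst, hsecond]
end

section
/- For every real number λ ∈ [0,1) and all integers k, s with 2 ≤ k ≤ s, it holds that 2·(λ/k + (1−λ)) / (λ/s + (1−λ)) ≤ 2 + 2λ/((1−λ)·k). In particular, for k = 2 the left-hand side is at most (2−λ)/(1−λ), and for any ε > 0 and any k ≥ (2/ε)·(λ/(1−λ)) the left-hand side is at most 2 + ε. -/
/-! Since `λ / s ≥ 0`, the denominator `λ/s + (1 - λ)` is at least `1 - λ`, so the ratio is at
most `2 (λ/k + (1 - λ)) / (1 - λ) = 2 + 2λ / ((1 - λ) k)`; the two special cases are rewritings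
of this bound. -/

section BruteForceRatio

variable {lam : ℝ}

theorem div_le_div_one_sub_of_nonneg {a s : ℝ} (ha : 0 ≤ a) (h0 : 0 ≤ lam) (h1 : lam < 1)
    (hs : 0 ≤ s) : a / (lam / s + (1 - lam)) ≤ a / (1 - lam) :=
  div_le_div_of_nonneg_left ha (sub_pos.2 h1) (le_add_of_nonneg_left (div_nonneg h0 hs))

theorem two_mul_div_one_sub_eq (h1 : lam ≠ 1) (k : ℝ) :
    2 * (lam / k + (1 - lam)) / (1 - lam) = 2 + 2 * lam / ((1 - lam) * k) := by
  have hl : 1 - lam ≠ 0 := sub_ne_zero.2 h1.symm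
  rcases eq_or_ne k 0 with rfl | hk
  · simp [hl]
  · field_simp
    ring

theorem two_add_two_mul_div_two_eq (h1 : lam ≠ 1) :
    2 + 2 * lam / ((1 - lam) * 2) = (2 - lam) / (1 - lam) := by
  have hl : 1 - lam ≠ 0 := sub_ne_zero.2 h1.symm
  field_simp
  ring

theorem brute_force_ratio_le (h0 : 0 ≤ lam) (h1 : lam < 1) {k s : ℝ} (hk : 0 ≤ k)
    (hs : 0 ≤ s) :
    2 * (lam / k + (1 - lam)) / (lam / s + (1 - lam)) ≤ 2 + 2 * lam / ((1 - lam) * k) := by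
  have hnum : 0 ≤ 2 * (lam / k + (1 - lam)) := by
    have := div_nonneg h0 hk
    linarith
  rw [← two_mul_div_one_sub_eq h1.ne k]
  exact div_le_div_one_sub_of_nonneg hnum h0 h1 hs

end BruteForceRatio

theorem mul_div_le_of_div_mul_le {a c k ε : ℝ} (hε : 0 < ε) (hk : 0 ≤ k)
    (h : a / ε * c ≤ k) : a * c / k ≤ ε := by
  rcases hk.eq_or_lt with rfl | hk
  · simpa using hε.le
  · rw [div_le_iff₀ hk]
    rw [div_mul_eq_mul_div, div_le_iff₀ hε] at h
    linarith

theorem stmt9_general (lam : ℝ) (h0 : 0 ≤ lam) (h1 : lam < 1)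
    (k s : ℕ) :
    2 * (lam / k + (1 - lam)) / (lam / s + (1 - lam)) ≤ 2 + 2 * lam / ((1 - lam) * k) ∧
    (k = 2 → 2 * (lam / k + (1 - lam)) / (lam / s + (1 - lam)) ≤ (2 - lam) / (1 - lam)) ∧
    (∀ ε : ℝ, 0 < ε → (2 / ε) * (lam / (1 - lam)) ≤ k →
      2 * (lam / k + (1 - lam)) / (lam / s + (1 - lam)) ≤ 2 + ε) := by
  have key := brute_force_ratio_le h0 h1 k.cast_nonneg s.cast_nonneg
  refine ⟨key, ?_, ?_⟩
  · rintro rfl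
    simpa [two_add_two_mul_div_two_eq h1.ne] using key
  · intro ε hε hkε
    have : 2 * lam / ((1 - lam) * k) ≤ ε := by
      rw [div_mul_eq_div_div, mul_div_assoc]
      exact mul_div_le_of_div_mul_le hε k.cast_nonneg hkε
    linarith

theorem stmt9 (lam : ℝ) (h0 : 0 ≤ lam) (h1 : lam < 1)
    (k s : ℕ) (hk : 2 ≤ k) (hks : k ≤ s) :
    2 * (lam / k + (1 - lam)) / (lam / s + (1 - lam)) ≤ 2 + 2 * lam / ((1 - lam) * k) ∧
    (k = 2 → 2 * (lam / k + (1 - lam)) / (lam / s + (1 - lam)) ≤ (2 - lam) / (1 - lam)) ∧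
    (∀ ε : ℝ, 0 < ε → (2 / ε) * (lam / (1 - lam)) ≤ k →
      2 * (lam / k + (1 - lam)) / (lam / s + (1 - lam)) ≤ 2 + ε) :=
  stmt9_general lam h0 h1 k s
end

section
/- Let λ ∈ [0,1) be real and define f(x) = x²/(λx + (1−λ)) for x ≥ 1 and f(0)=0. For all integers s, n with 2 ≤ s ≤ n, it holds that min{ (f(2)/2)/(f(s)/s²), (2f(n)/n)/(f(s)−f(s−1)) } ≤ 4/(1+λ). Equivalently, min{ 2(λs+(1−λ))/(1+λ), (2n/(λn+(1−λ))) / ( s²/(λs+(1−λ)) − (s−1)²/(λ(s−1)+(1−λ)) ) } ≤ 4/(1+λ). -/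
/-!
Write `g x = λx + (1 - λ)`, so that `f x = x² / g x`. The first quantity equals `2 g(s) / (1 + λ)`,
which is at most `4 / (1 + λ)` as long as `λ(s - 1) ≤ 1`. Otherwise `λ > 0`, and we bound the second
quantity using `2n / g(n) ≤ 2 / λ` together with
`f(s) - f(s - 1) = N / (g(s) g(s - 1))`, where `N = λ(s² - 3s + 1) + 2s - 1`: what remains is
`(1 + λ) g(s) g(s - 1) ≤ 2λN`, and the difference of the two sides factors as
`(1 - λ) ((λ(s - 1) - 1)(λ(s - 1) + 3 - λ) + 2)`.
-/

section
variable {a x y : ℝ}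

lemma mul_add_one_sub_pos (h0 : 0 ≤ a) (h1 : a < 1) (hx : 0 ≤ x) : 0 < a * x + (1 - a) := by
  nlinarith

lemma div_mul_add_one_sub_le_inv (ha : 0 < a) (h1 : a < 1) (hy : 0 ≤ y) :
    y / (a * y + (1 - a)) ≤ 1 / a := by
  rw [div_le_div_iff₀ (mul_add_one_sub_pos ha.le h1 hy) ha]
  linarith

lemma sq_div_sub_sq_div (hu : a * x + (1 - a) ≠ 0) (hv : a * (x - 1) + (1 - a) ≠ 0) :
    x ^ 2 / (a * x + (1 - a)) - (x - 1) ^ 2 / (a * (x - 1) + (1 - a)) =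
      (a * (x ^ 2 - 3 * x + 1) + 2 * x - 1) / ((a * x + (1 - a)) * (a * (x - 1) + (1 - a))) := by
  rw [div_sub_div _ _ hu hv]
  ring

lemma two_mul_mul_sub_mul_mul_eq :
    2 * a * (a * (x ^ 2 - 3 * x + 1) + 2 * x - 1) -
        (1 + a) * ((a * x + (1 - a)) * (a * (x - 1) + (1 - a))) =
      (1 - a) * ((a * (x - 1) - 1) * (a * (x - 1) + 3 - a) + 2) := by
  ring

lemma first_le_of_mul_sub_one_le (h0 : 0 ≤ a) (hx : a * (x - 1) ≤ 1) :
    2 * (a * x + (1 - a)) / (1 + a) ≤ 4 / (1 + a) := by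
  gcongr
  linarith

lemma second_le_of_one_lt_mul_sub_one (h0 : 0 ≤ a) (h1 : a < 1) (hx : 1 < a * (x - 1))
    (hxy : x ≤ y) :
    (2 * y / (a * y + (1 - a))) /
        (x ^ 2 / (a * x + (1 - a)) - (x - 1) ^ 2 / (a * (x - 1) + (1 - a))) ≤
      4 / (1 + a) := by
  have ha : 0 < a := h0.lt_of_ne (by rintro rfl; norm_num at hx)
  have hx1 : 1 ≤ x := by nlinarith
  have hu : 0 < a * x + (1 - a) := mul_add_one_sub_pos h0 h1 (by linarith)
  have hv : 0 < a * (x - 1) + (1 - a) := mul_add_one_sub_pos h0 h1 (by linarith)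
  set N := a * (x ^ 2 - 3 * x + 1) + 2 * x - 1
  have hΔ : (1 + a) * ((a * x + (1 - a)) * (a * (x - 1) + (1 - a))) ≤ 2 * a * N := by
    rw [← sub_nonneg, two_mul_mul_sub_mul_mul_eq]
    have : 0 ≤ (a * (x - 1) - 1) * (a * (x - 1) + 3 - a) := by
      apply mul_nonneg <;> linarith
    nlinarith
  have hN : 0 < N := by
    have : 0 < 2 * a * N := lt_of_lt_of_le (by positivity) hΔ
    nlinarith
  rw [sq_div_sub_sq_div hu.ne' hv.ne', div_div_eq_mul_div]
  calc 2 * y / (a * y + (1 - a)) * ((a * x + (1 - a)) * (a * (x - 1) + (1 - a))) / N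
      ≤ 2 * (1 / a) * ((a * x + (1 - a)) * (a * (x - 1) + (1 - a))) / N := by
        rw [mul_div_assoc 2]
        gcongr 2 * ?_ * _ / _
        exact div_mul_add_one_sub_le_inv ha h1 (by linarith)
    _ ≤ 4 / (1 + a) := by
        rw [div_le_div_iff₀ hN (by linarith)]
        field_simp
        linarith

lemma min_first_second_le (h0 : 0 ≤ a) (h1 : a < 1) (hxy : x ≤ y) :
    min (2 * (a * x + (1 - a)) / (1 + a))
        ((2 * y / (a * y + (1 - a))) /
          (x ^ 2 / (a * x + (1 - a)) - (x - 1) ^ 2 / (a * (x - 1) + (1 - a)))) ≤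
      4 / (1 + a) := by
  rcases le_or_gt (a * (x - 1)) 1 with hsmall | hlarge
  · exact (min_le_left _ _).trans (first_le_of_mul_sub_one_le h0 hsmall)
  · exact (min_le_right _ _).trans (second_le_of_one_lt_mul_sub_one h0 h1 hlarge hxy)

end

theorem stmt10_general (lam : ℝ) (h0 : 0 ≤ lam) (h1 : lam < 1)
    (f : ℕ → ℝ)
    (hf : ∀ x : ℕ, 1 ≤ x → f x = (x : ℝ) ^ 2 / (lam * x + (1 - lam)))
    (s n : ℕ) (hs : 2 ≤ s) (hsn : s ≤ n) :
    min ((f 2 / 2) / (f s / (s : ℝ) ^ 2)) ((2 * f n / (n : ℝ)) / (f s - f (s - 1))) ≤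
      4 / (1 + lam) ∧
    min (2 * (lam * s + (1 - lam)) / (1 + lam))
        ((2 * n / (lam * n + (1 - lam))) /
          ((s : ℝ) ^ 2 / (lam * s + (1 - lam)) -
            ((s : ℝ) - 1) ^ 2 / (lam * ((s : ℝ) - 1) + (1 - lam)))) ≤
      4 / (1 + lam) := by
  have hn0 : (0 : ℝ) < n := by exact_mod_cast (show 0 < n by omega)
  have hfs1 : f (s - 1) = ((s : ℝ) - 1) ^ 2 / (lam * ((s : ℝ) - 1) + (1 - lam)) := by
    rw [hf (s - 1) (by omega), Nat.cast_sub (by omega), Nat.cast_one]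
  have hfirst : (f 2 / 2) / (f s / (s : ℝ) ^ 2) = 2 * (lam * s + (1 - lam)) / (1 + lam) := by
    rw [hf 2 le_add_self, hf s (by omega), Nat.cast_ofNat,
      show lam * 2 + (1 - lam) = 1 + lam by ring]
    field_simp
  have hsecond : 2 * f n / (n : ℝ) = 2 * n / (lam * n + (1 - lam)) := by
    rw [hf n (by omega)]
    field_simp
  have hkey := min_first_second_le h0 h1 (Nat.cast_le.mpr hsn : (s : ℝ) ≤ n)
  rw [hfirst, hsecond, hf s (by omega), hfs1]
  exact ⟨hkey, hkey⟩

theorem stmt10 (lam : ℝ) (h0 : 0 ≤ lam) (h1 : lam < 1)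
    (f : ℕ → ℝ) (hf0 : f 0 = 0)
    (hf : ∀ x : ℕ, 1 ≤ x → f x = (x : ℝ) ^ 2 / (lam * x + (1 - lam)))
    (s n : ℕ) (hs : 2 ≤ s) (hsn : s ≤ n) :
    min ((f 2 / 2) / (f s / (s : ℝ) ^ 2)) ((2 * f n / (n : ℝ)) / (f s - f (s - 1))) ≤
      4 / (1 + lam) ∧
    min (2 * (lam * s + (1 - lam)) / (1 + lam))
        ((2 * n / (lam * n + (1 - lam))) /
          ((s : ℝ) ^ 2 / (lam * s + (1 - lam)) -
            ((s : ℝ) - 1) ^ 2 / (lam * ((s : ℝ) - 1) + (1 - lam)))) ≤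
      4 / (1 + lam) :=
  stmt10_general lam h0 h1 f hf s n hs hsn
end

section
/- Let λ̂ > 0 be a real number, let k be an integer with 2 ≤ k ≤ n, and let w_k ∈ ℝ be such that (k, w_k) ∈ P and w(S) − λ̂·|S| < w_k − λ̂·k for every S ⊆ V with (|S|, w(S)) ≠ (k, w_k) (i.e., (k, w_k) is a dense frontier point witnessed by λ̂). Define f:ℤ_{≥0}→ℝ by f(0)=0 and f(x) = λ̂(x−k) + w_k for x ≥ 1. Then f is a monotonically non-decreasing concave size function with f(x) > 0 for x ≥ 1, and every nonempty S ⊆ V maximizing w(S)/f(|S|) satisfies |S| = k and w(S) = w_k. -/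
variable {V : Type} [Fintype V] [DecidableEq V]

section AffineSizeFunction

variable {f : ℕ → ℝ} {a b : ℝ}

theorem monotone_of_eq_affine (ha : 0 ≤ a) (hb : 0 ≤ b) (hf0 : f 0 = 0)
    (hf : ∀ x, 1 ≤ x → f x = a * x + b) : Monotone f := by
  refine monotone_nat_of_le_succ fun x => ?_
  rw [hf (x + 1) (Nat.le_add_left 1 x)]
  rcases Nat.eq_zero_or_pos x with rfl | hx
  · rw [hf0]
    positivity
  · rw [hf x hx]
    push_cast
    nlinarith

theorem pos_of_eq_affine (ha : 0 ≤ a) (hb : 0 < b) (hf : ∀ x, 1 ≤ x → f x = a * x + b)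
    {x : ℕ} (hx : 1 ≤ x) : 0 < f x := by
  rw [hf x hx]
  positivity

theorem second_diff_nonpos_of_eq_affine (hb : 0 ≤ b) (hf0 : f 0 = 0)
    (hf : ∀ x, 1 ≤ x → f x = a * x + b) (x : ℕ) : f x - 2 * f (x + 1) + f (x + 2) ≤ 0 := by
  rw [hf (x + 1) (by omega), hf (x + 2) (by omega)]
  rcases Nat.eq_zero_or_pos x with rfl | hx
  · rw [hf0]
    push_cast
    linarith
  · rw [hf x hx]
    push_cast
    linarith

end AffineSizeFunction

theorem size_le_of_forall_ratio_le {α : Type*} {g : Finset α → ℝ} {f : ℕ → ℝ} {S T : Finset α}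
    (hmax : ∀ T' : Finset α, T'.Nonempty → g T' / f T'.card ≤ g S / f S.card)
    (hT : T.Nonempty) (hfT : f T.card = g T) (hgT : 0 < g T) (hfS : 0 < f S.card) :
    f S.card ≤ g S := by
  have hratio := hmax T hT
  rw [hfT, div_self hgT.ne', le_div_iff₀ hfS, one_mul] at hratio
  exact hratio

theorem WGraph.wS_empty (G : WGraph V) : G.wS ∅ = 0 := by
  simp [WGraph.wS]

theorem WGraph.mul_lt_of_frontier (G : WGraph V) {lam wk : ℝ} {k : ℕ} (hk : k ≠ 0)
    (hfront : ∀ S : Finset V, (S.card, G.wS S) ≠ (k, wk) →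
      G.wS S - lam * S.card < wk - lam * k) :
    lam * k < wk := by
  have hempty := hfront ∅ fun h => hk (congrArg Prod.fst h).symm
  rw [G.wS_empty, Finset.card_empty, Nat.cast_zero, mul_zero, sub_zero] at hempty
  linarith

theorem stmt11_general (G : WGraph V) (lam : ℝ) (hlam : 0 < lam)
    (k : ℕ) (hk2 : 2 ≤ k)
    (wk : ℝ) (hwit : ∃ S : Finset V, S.card = k ∧ G.wS S = wk)
    (hfront : ∀ S : Finset V, (S.card, G.wS S) ≠ (k, wk) →
      G.wS S - lam * S.card < wk - lam * k)
    (f : ℕ → ℝ) (hf0 : f 0 = 0)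
    (hf : ∀ x : ℕ, 1 ≤ x → f x = lam * ((x : ℝ) - k) + wk) :
    (Monotone f ∧ (∀ x, 1 ≤ x → 0 < f x) ∧
      (∀ x : ℕ, f x - 2 * f (x + 1) + f (x + 2) ≤ 0)) ∧
    (∀ S : Finset V, S.Nonempty →
      (∀ T : Finset V, T.Nonempty → G.wS T / f T.card ≤ G.wS S / f S.card) →
      S.card = k ∧ G.wS S = wk) := by
  have hc : 0 < wk - lam * k := sub_pos.2 (G.mul_lt_of_frontier (by omega) hfront)
  have hf' : ∀ x : ℕ, 1 ≤ x → f x = lam * x + (wk - lam * k) := fun x hx => by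
    rw [hf x hx]
    ring
  refine ⟨⟨monotone_of_eq_affine hlam.le hc.le hf0 hf',
    fun x => pos_of_eq_affine hlam.le hc hf', second_diff_nonpos_of_eq_affine hc.le hf0 hf'⟩, ?_⟩
  intro S hS hmax
  obtain ⟨T, hTcard, hTw⟩ := hwit
  have hfk : f T.card = G.wS T := by
    rw [hf' T.card (by omega), hTcard, hTw]
    ring
  have hSle := size_le_of_forall_ratio_le hmax (Finset.card_pos.1 (by omega)) hfk
    (by rw [hTw]; nlinarith) (pos_of_eq_affine hlam.le hc hf' hS.card_pos)
  rw [hf' S.card hS.card_pos] at hSle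
  by_contra hne
  have hlt := hfront S fun h => hne (Prod.ext_iff.1 h)
  linarith

theorem stmt11 (G : WGraph V) (lam : ℝ) (hlam : 0 < lam)
    (k : ℕ) (hk2 : 2 ≤ k) (hkn : k ≤ Fintype.card V)
    (wk : ℝ) (hwit : ∃ S : Finset V, S.card = k ∧ G.wS S = wk)
    (hfront : ∀ S : Finset V, (S.card, G.wS S) ≠ (k, wk) →
      G.wS S - lam * S.card < wk - lam * k)
    (f : ℕ → ℝ) (hf0 : f 0 = 0)
    (hf : ∀ x : ℕ, 1 ≤ x → f x = lam * ((x : ℝ) - k) + wk) :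
    (Monotone f ∧ (∀ x, 1 ≤ x → 0 < f x) ∧
      (∀ x : ℕ, f x - 2 * f (x + 1) + f (x + 2) ≤ 0)) ∧
    (∀ S : Finset V, S.Nonempty →
      (∀ T : Finset V, T.Nonempty → G.wS T / f T.card ≤ G.wS S / f S.card) →
      S.card = k ∧ G.wS S = wk) :=
  stmt11_general G lam hlam k hk2 wk hwit hfront f hf0 hf
end

section
/- Let f be a strictly concave size function, i.e., f(x) − 2f(x+1) + f(x+2) < 0 for all x ∈ ℤ_{≥0}. Let S* be an optimal solution to f-DS and write k = |S*|. Then there exists λ̂ > 0 such that (k, w(S*)) is the unique maximizer of y − λ̂x over P; that is, w(S) − λ̂·|S| < w(S*) − λ̂·k for every S ⊆ V with (|S|, w(S)) ≠ (k, w(S*)). In other words, (|S*|, w(S*)) is a dense frontier point. -/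
variable {V : Type} [Fintype V] [DecidableEq V]

/-!
Let `ρ = w(S*) / f k` be the optimal density, so `w(S) ≤ ρ f(|S|)` for every `S`, with equality
at `S*`. Strict concavity leaves room for a slope `c` strictly between `f (k+1) - f k` and
`f k - f (k-1)`, and concavity then makes `x ↦ f x - c x` strictly maximised at `x = k`. Hence
`λ = ρ c` works: `w(S) - λ|S| ≤ ρ (f |S| - c |S|) < w(S*) - λ k` when `|S| ≠ k`, while for
`|S| = k` one has `w(S) ≤ ρ f k = w(S*)`. Monotonicity of `f` gives `c > 0`, and `ρ > 0` because
a single edge already has positive density.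
-/

theorem apply_lt_apply_of_antitone_succ_sub {α : Type*} [AddCommGroup α] [LinearOrder α]
    [IsOrderedAddMonoid α] {g : ℕ → α}
    (hg : Antitone fun j => g (j + 1) - g j) {k : ℕ}
    (hl : g (k - 1) < g k) (hr : g (k + 1) < g k) {s : ℕ} (hs : s ≠ k) : g s < g k := by
  obtain ⟨m, rfl⟩ : ∃ m, k = m + 1 :=
    Nat.exists_eq_add_one_of_ne_zero (by rintro rfl; exact lt_irrefl _ hl)
  rw [Nat.add_sub_cancel] at hl
  rcases hs.lt_or_gt with hlt | hgt
  · have hmono : StrictMonoOn g (Set.Iic (m + 1)) := by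
      refine strictMonoOn_Iic_of_lt_succ fun j hj => ?_
      rw [Order.succ_eq_add_one, ← sub_pos]
      exact (sub_pos.mpr hl).trans_le (hg (Nat.le_of_lt_succ hj))
    exact hmono (Set.mem_Iic.mpr hlt.le) Set.self_mem_Iic hlt
  · have hanti : StrictAntiOn g (Set.Ici (m + 1)) := by
      refine strictAntiOn_of_succ_lt Set.ordConnected_Ici fun j _ hj _ => ?_
      rw [Order.succ_eq_add_one, ← sub_neg]
      exact (hg (Set.mem_Ici.mp hj)).trans_lt (sub_neg.mpr hr)
    exact hanti Set.self_mem_Ici (Set.mem_Ici.mpr hgt.le) hgt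

theorem sub_mul_lt_of_concave {f : ℕ → ℝ}
    (hconc : ∀ x : ℕ, f x - 2 * f (x + 1) + f (x + 2) ≤ 0) {k : ℕ} (hk : 1 ≤ k) {c : ℝ}
    (hc_right : f (k + 1) - f k < c) (hc_left : c < f k - f (k - 1)) {s : ℕ} (hs : s ≠ k) :
    f s - c * s < f k - c * k := by
  refine apply_lt_apply_of_antitone_succ_sub (g := fun x : ℕ => f x - c * x)
    (antitone_nat_of_succ_le fun j => ?_) ?_ ?_ hs
  · push_cast
    linarith [hconc j]
  · rw [Nat.cast_sub hk, Nat.cast_one]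
    linarith
  · push_cast
    linarith

namespace WGraph

theorem wS_empty_s12 (G : WGraph V) : G.wS ∅ = 0 := by
  simp [wS]

theorem wS_pair_pos (G : WGraph V) {a b : V} (he : s(a, b) ∈ G.E) : 0 < G.wS {a, b} :=
  Finset.sum_pos (fun e he => G.w_pos e (Finset.mem_filter.mp he).1)
    ⟨s(a, b), by simp [he]⟩

theorem exists_card_eq_two_wS_pos (G : WGraph V) (hE : G.E.Nonempty) :
    ∃ S : Finset V, S.card = 2 ∧ 0 < G.wS S := by
  obtain ⟨e, he⟩ := hE
  induction e using Sym2.ind with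
  | _ a b =>
    have hab : a ≠ b := fun h => G.not_diag _ he (by simp [h])
    exact ⟨{a, b}, Finset.card_pair hab, G.wS_pair_pos he⟩

theorem wS_le_mul_of_div_le (G : WGraph V) {f : ℕ → ℝ} (hf0 : f 0 = 0)
    (hfpos : ∀ x, 1 ≤ x → 0 < f x) {ρ : ℝ}
    (hρ : ∀ S : Finset V, S.Nonempty → G.wS S / f S.card ≤ ρ) (S : Finset V) :
    G.wS S ≤ ρ * f S.card := by
  rcases S.eq_empty_or_nonempty with rfl | hS
  · simp [G.wS_empty_s12, hf0]
  · rw [← div_le_iff₀ (hfpos _ (Finset.card_pos.mpr hS))]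
    exact hρ S hS

end WGraph

theorem stmt12 (G : WGraph V) (hE : G.E.Nonempty)
    (f : ℕ → ℝ) (hmono : Monotone f) (hf0 : f 0 = 0) (hfpos : ∀ x, 1 ≤ x → 0 < f x)
    (hconc : ∀ x : ℕ, f x - 2 * f (x + 1) + f (x + 2) < 0)
    (Sstar : Finset V) (hne : Sstar.Nonempty)
    (hopt : ∀ S : Finset V, S.Nonempty → G.wS S / f S.card ≤ G.wS Sstar / f Sstar.card) :
    ∃ lam : ℝ, 0 < lam ∧
      ∀ S : Finset V, (S.card, G.wS S) ≠ (Sstar.card, G.wS Sstar) →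
        G.wS S - lam * S.card < G.wS Sstar - lam * Sstar.card := by
  set k := Sstar.card
  set ρ := G.wS Sstar / f k
  have hk : 1 ≤ k := Finset.card_pos.mpr hne
  have hρ : 0 < ρ := by
    obtain ⟨S₀, hcard, hpos⟩ := G.exists_card_eq_two_wS_pos hE
    exact (div_pos hpos (hfpos _ (by omega))).trans_le (hopt S₀ (Finset.card_pos.mp (by omega)))
  have hslope : f (k + 1) - f k < f k - f (k - 1) := by
    have := hconc (k - 1)
    rw [show k - 1 + 1 = k by omega, show k - 1 + 2 = k + 1 by omega] at this
    linarith
  obtain ⟨c, hc_right, hc_left⟩ := exists_between hslope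
  have hc : 0 < c := (sub_nonneg.mpr (hmono (Nat.le_add_right k 1))).trans_lt hc_right
  have hub := G.wS_le_mul_of_div_le hf0 hfpos hopt
  have hWρ : G.wS Sstar = ρ * f k := (div_mul_cancel₀ _ (hfpos k hk).ne').symm
  refine ⟨ρ * c, mul_pos hρ hc, fun S hS => ?_⟩
  by_cases hcard : S.card = k
  · have hlt : G.wS S < G.wS Sstar :=
      (hWρ ▸ hcard ▸ hub S).lt_of_ne fun h => hS (by rw [hcard, h])
    rw [hcard]
    linarith
  · calc G.wS S - ρ * c * S.card ≤ ρ * (f S.card - c * S.card) := by linarith [hub S]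
      _ < ρ * (f k - c * k) :=
        mul_lt_mul_of_pos_left (sub_mul_lt_of_concave (fun x => (hconc x).le) hk hc_right
          hc_left hcard) hρ
      _ = G.wS Sstar - ρ * c * k := by rw [hWρ]; ring
end

section
/- Let f:ℤ_{≥0}→ℝ be concave (f(x)−2f(x+1)+f(x+2) ≤ 0 for all x) with f(0)=0, and let k, n be integers with 1 ≤ k ≤ n. If y_1 ≥ y_2 ≥ … ≥ y_n are real numbers in [0,1] with Σ_{h=1}^n y_h = k, then Σ_{h=1}^n (f(h) − f(h−1))·y_h ≤ f(k). -/
/-!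
Write `D i = f (i + 1) - f i`; concavity says `D` is antitone, the sum on the left is
`∑_{i<n} D i * y (i + 1)` and `f k = ∑_{i<k} D i`. Comparing `y (i + 1)` with the indicator of
`i < k`, which has the same total mass `k`, each term of
`∑_{i<n} (D i - D k) * (y (i + 1) - [i < k])` is nonpositive, and this sum is exactly the
difference of the two sides.
-/

open Finset

theorem Finset.sum_Icc_one_eq_sum_range {M : Type*} [AddCommMonoid M] (g : ℕ → M) (n : ℕ) :
    ∑ h ∈ Icc 1 n, g h = ∑ i ∈ range n, g (i + 1) := by
  induction n with
  | zero => simp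
  | succ n ih => rw [sum_Icc_succ_top (by omega), ih, sum_range_succ]

lemma antitone_sub_of_concave {f : ℕ → ℝ} (hconc : ∀ x : ℕ, f x - 2 * f (x + 1) + f (x + 2) ≤ 0) :
    Antitone fun i => f (i + 1) - f i :=
  antitone_nat_of_succ_le fun i => by linarith [hconc i]

lemma sum_mul_le_sum_range_of_antitone {D y : ℕ → ℝ} (hD : Antitone D) {k n : ℕ} (hkn : k ≤ n)
    (hy : ∀ i < n, y i ∈ Set.Icc (0 : ℝ) 1) (hsum : ∑ i ∈ range n, y i = k) :
    ∑ i ∈ range n, D i * y i ≤ ∑ i ∈ range k, D i := by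
  set e : ℕ → ℝ := fun i => if i < k then 1 else 0
  have he : ∑ i ∈ range n, e i = k := by
    rw [sum_ite, sum_const_zero, add_zero, sum_const, nsmul_one,
      show (range n).filter (· < k) = range k by ext i; simp; omega, card_range]
  have hDe : ∑ i ∈ range n, D i * e i = ∑ i ∈ range k, D i := by
    simp only [e, mul_ite, mul_one, mul_zero, sum_ite, sum_const_zero, add_zero]
    rw [show (range n).filter (· < k) = range k by ext i; simp; omega]
  have hterm : ∀ i ∈ range n, (D i - D k) * (y i - e i) ≤ 0 := by
    intro i hi
    obtain ⟨hy0, hy1⟩ := hy i (mem_range.mp hi)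
    by_cases hik : i < k
    · simp only [e, if_pos hik]
      exact mul_nonpos_of_nonneg_of_nonpos (sub_nonneg.mpr (hD hik.le)) (by linarith)
    · simp only [e, if_neg hik]
      exact mul_nonpos_of_nonpos_of_nonneg (sub_nonpos.mpr (hD (not_lt.mp hik))) (by linarith)
  have hdiff : ∑ i ∈ range n, D i * y i - ∑ i ∈ range k, D i
      = ∑ i ∈ range n, (D i - D k) * (y i - e i) := by
    simp only [sub_mul, mul_sub, sum_sub_distrib, ← mul_sum, hsum, he, hDe]
    ring
  linarith [sum_nonpos hterm]

theorem stmt14_general (f : ℕ → ℝ) (hf0 : f 0 = 0)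
    (hconc : ∀ x : ℕ, f x - 2 * f (x + 1) + f (x + 2) ≤ 0)
    (k n : ℕ)
    (y : ℕ → ℝ)
    (hrange : ∀ h : ℕ, 1 ≤ h → h ≤ n → y h ∈ Set.Icc (0 : ℝ) 1)
    (hsum : ∑ h ∈ Finset.Icc 1 n, y h = (k : ℝ)) :
    ∑ h ∈ Finset.Icc 1 n, (f h - f (h - 1)) * y h ≤ f k := by
  rw [sum_Icc_one_eq_sum_range] at hsum ⊢
  have hy : ∀ i < n, y (i + 1) ∈ Set.Icc (0 : ℝ) 1 := fun i hi => hrange (i + 1) (by omega) hi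
  have hkn : k ≤ n := by
    have hle : ∑ i ∈ range n, y (i + 1) ≤ ∑ _i ∈ range n, (1 : ℝ) :=
      sum_le_sum fun i hi => (hy i (mem_range.mp hi)).2
    rw [hsum, sum_const, card_range, nsmul_one] at hle
    exact_mod_cast hle
  calc ∑ i ∈ range n, (f (i + 1) - f (i + 1 - 1)) * y (i + 1)
      = ∑ i ∈ range n, (f (i + 1) - f i) * y (i + 1) := by simp only [Nat.add_sub_cancel]
    _ ≤ ∑ i ∈ range k, (f (i + 1) - f i) :=
      sum_mul_le_sum_range_of_antitone (antitone_sub_of_concave hconc) hkn hy hsum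
    _ = f k := by rw [sum_range_sub, hf0, sub_zero]

theorem stmt14 (f : ℕ → ℝ) (hf0 : f 0 = 0)
    (hconc : ∀ x : ℕ, f x - 2 * f (x + 1) + f (x + 2) ≤ 0)
    (k n : ℕ) (hk1 : 1 ≤ k) (hkn : k ≤ n)
    (y : ℕ → ℝ) (hmono : ∀ h : ℕ, 1 ≤ h → h < n → y (h + 1) ≤ y h)
    (hrange : ∀ h : ℕ, 1 ≤ h → h ≤ n → y h ∈ Set.Icc (0 : ℝ) 1)
    (hsum : ∑ h ∈ Finset.Icc 1 n, y h = (k : ℝ)) :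
    ∑ h ∈ Finset.Icc 1 n, (f h - f (h - 1)) * y h ≤ f k :=
  stmt14_general f hf0 hconc k n y hrange hsum
end
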